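/- arXiv:2302.05601 — 10 statements merged into one kernel-verified Lean document; each statement's English description precedes it below -/
import Mathlib

section
/- For 0 < p ≤ 1 < q and a non-zero vector w ∈ ℝ^d, the PQ Index I_{p,q}(w) = 1 - d^(1/q - 1/p) ‖w‖_p / ‖w‖_q satisfies 0 ≤ I_{p,q}(w) ≤ 1 - d^(1/q - 1/p). -/
open Finset

/-- The ℓ_r (quasi-)norm of a vector `w ∈ ℝ^d`: `(∑ i |w i| ^ r) ^ (1/r)`. -/
noncomputable def lnorm {d : ℕ} (r : ℝ) (w : Fin d → ℝ) : ℝ :=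
  (∑ i, |w i| ^ r) ^ (1 / r)

/-- The PQ Index `I_{p,q}(w) = 1 - d^(1/q - 1/p) * ‖w‖_p / ‖w‖_q`. -/
noncomputable def PQI {d : ℕ} (p q : ℝ) (w : Fin d → ℝ) : ℝ :=
  1 - (d : ℝ) ^ (1 / q - 1 / p) * lnorm p w / lnorm q w

/-- For nonnegative terms and `1 ≤ r`, `∑ aᵢ^r ≤ (∑ aᵢ)^r`. -/
lemma sum_rpow_le_rpow_sum' {d : ℕ} (a : Fin d → ℝ) (ha : ∀ i, 0 ≤ a i)
    {r : ℝ} (hr : 1 ≤ r) : ∑ i, a i ^ r ≤ (∑ i, a i) ^ r := by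
  set S : ℝ := ∑ i, a i with hS
  have hS0 : 0 ≤ S := Finset.sum_nonneg fun i _ => ha i
  have key : ∀ i, a i ^ r ≤ S ^ (r - 1) * a i := by
    intro i
    rcases eq_or_lt_of_le (ha i) with h0 | h0
    · rw [← h0, Real.zero_rpow (by linarith), mul_zero]
    · have hle : a i ≤ S := Finset.single_le_sum (fun j _ => ha j) (Finset.mem_univ i)
      calc a i ^ r = a i ^ (r - 1) * a i := by
            rw [← Real.rpow_add_one (ne_of_gt h0)]; ring_nf
        _ ≤ S ^ (r - 1) * a i :=
            mul_le_mul_of_nonneg_right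
              (Real.rpow_le_rpow (le_of_lt h0) hle (by linarith)) (ha i)
  calc ∑ i, a i ^ r ≤ ∑ i, S ^ (r - 1) * a i := Finset.sum_le_sum fun i _ => key i
    _ = S ^ (r - 1) * S := by rw [← Finset.mul_sum]
    _ = S ^ r := by
        rcases eq_or_lt_of_le hS0 with h0 | h0
        · rw [← h0, mul_zero, eq_comm, Real.zero_rpow (by linarith)]
        · rw [← Real.rpow_add_one (ne_of_gt h0)]; ring_nf

theorem stmt1 {d : ℕ} (p q : ℝ) (hp : 0 < p) (hp1 : p ≤ 1) (hq : 1 < q)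
    (w : Fin d → ℝ) (hw : w ≠ 0) :
    0 ≤ PQI p q w ∧ PQI p q w ≤ 1 - (d : ℝ) ^ (1 / q - 1 / p) := by
  have hq0 : 0 < q := lt_trans one_pos hq
  obtain ⟨i₀, hi₀⟩ : ∃ i, w i ≠ 0 := by
    by_contra h; push_neg at h; exact hw (funext h)
  have hd : 0 < (d : ℝ) := by
    have : 0 < d := Fin.pos i₀
    exact_mod_cast this
  have habs : 0 < |w i₀| := abs_pos.mpr hi₀
  -- positivity of the sums
  have sum_pos : ∀ r : ℝ, 0 < r → 0 < ∑ i, |w i| ^ r := by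
    intro r hr
    refine Finset.sum_pos' (fun i _ => Real.rpow_nonneg (abs_nonneg _) r)
      ⟨i₀, Finset.mem_univ i₀, Real.rpow_pos_of_pos habs r⟩
  have hSp := sum_pos p hp
  have hSq := sum_pos q hq0
  have hLp : 0 < lnorm p w := Real.rpow_pos_of_pos hSp _
  have hLq : 0 < lnorm q w := Real.rpow_pos_of_pos hSq _
  have hr1 : 1 ≤ q / p := by
    rw [le_div_iff₀ hp]; linarith
  have hpow : ∀ i, (|w i| ^ p) ^ (q / p) = |w i| ^ q := by
    intro i
    rw [← Real.rpow_mul (abs_nonneg _), mul_comm, div_mul_cancel₀ q (ne_of_gt hp)]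
  -- Lemma A : lnorm q w ≤ lnorm p w
  have lemA : lnorm q w ≤ lnorm p w := by
    have h1 : ∑ i, |w i| ^ q ≤ (∑ i, |w i| ^ p) ^ (q / p) := by
      have := sum_rpow_le_rpow_sum' (fun i => |w i| ^ p)
        (fun i => Real.rpow_nonneg (abs_nonneg _) p) hr1
      simpa only [hpow] using this
    have h2 : (∑ i, |w i| ^ q) ^ (1 / q) ≤ ((∑ i, |w i| ^ p) ^ (q / p)) ^ (1 / q) :=
      Real.rpow_le_rpow (le_of_lt hSq) h1 (by positivity)
    calc lnorm q w ≤ ((∑ i, |w i| ^ p) ^ (q / p)) ^ (1 / q) := h2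
      _ = lnorm p w := by
          rw [← Real.rpow_mul (le_of_lt hSp),
            show q / p * (1 / q) = 1 / p by field_simp]
          rfl
  -- Lemma B : lnorm p w ≤ d^(1/p - 1/q) * lnorm q w
  have lemB : lnorm p w ≤ (d : ℝ) ^ (1 / p - 1 / q) * lnorm q w := by
    have h1 : (∑ i, |w i| ^ p) ^ (q / p) ≤ (d : ℝ) ^ (q / p - 1) * ∑ i, |w i| ^ q := by
      have := Real.rpow_sum_le_const_mul_sum_rpow_of_nonneg (f := fun i => |w i| ^ p)
        Finset.univ hr1 (fun i _ => Real.rpow_nonneg (abs_nonneg _) p)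
      simpa only [hpow, Finset.card_univ, Fintype.card_fin] using this
    have h2 : ((∑ i, |w i| ^ p) ^ (q / p)) ^ (1 / q)
        ≤ ((d : ℝ) ^ (q / p - 1) * ∑ i, |w i| ^ q) ^ (1 / q) :=
      Real.rpow_le_rpow (Real.rpow_nonneg (le_of_lt hSp) _) h1 (by positivity)
    calc lnorm p w = ((∑ i, |w i| ^ p) ^ (q / p)) ^ (1 / q) := by
          rw [← Real.rpow_mul (le_of_lt hSp),
            show q / p * (1 / q) = 1 / p by field_simp]
          rfl
      _ ≤ ((d : ℝ) ^ (q / p - 1) * ∑ i, |w i| ^ q) ^ (1 / q) := h2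
      _ = (d : ℝ) ^ (1 / p - 1 / q) * lnorm q w := by
          rw [Real.mul_rpow (Real.rpow_nonneg (le_of_lt hd) _) (le_of_lt hSq),
            ← Real.rpow_mul (le_of_lt hd),
            show (q / p - 1) * (1 / q) = 1 / p - 1 / q by field_simp]
          rfl
  have hc : (0 : ℝ) < (d : ℝ) ^ (1 / q - 1 / p) := Real.rpow_pos_of_pos hd _
  constructor
  · -- 0 ≤ PQI
    rw [PQI, sub_nonneg, div_le_one hLq]
    calc (d : ℝ) ^ (1 / q - 1 / p) * lnorm p w
        ≤ (d : ℝ) ^ (1 / q - 1 / p) * ((d : ℝ) ^ (1 / p - 1 / q) * lnorm q w) :=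
          mul_le_mul_of_nonneg_left lemB (le_of_lt hc)
      _ = lnorm q w := by
          rw [← mul_assoc, ← Real.rpow_add hd,
            show 1 / q - 1 / p + (1 / p - 1 / q) = 0 by ring, Real.rpow_zero, one_mul]
  · -- PQI ≤ 1 - c
    rw [PQI, sub_le_sub_iff_left, le_div_iff₀ hLq]
    calc (d : ℝ) ^ (1 / q - 1 / p) * lnorm q w
        ≤ (d : ℝ) ^ (1 / q - 1 / p) * lnorm p w :=
          mul_le_mul_of_nonneg_left lemA (le_of_lt hc)
end

section
/- The PQ Index satisfies the Cloning property: for any non-zero w ∈ ℝ^d, I_{p,q}([w, w]) = I_{p,q}(w), where [w, w] ∈ ℝ^{2d} is the concatenation of w with itself. -/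
open Finset

theorem stmt5 {d : ℕ} (p q : ℝ) (hp : 0 < p) (hp1 : p ≤ 1) (hq : 1 < q)
    (w : Fin d → ℝ) (hw : w ≠ 0) :
    PQI p q (Fin.append w w) = PQI p q w := by
  obtain ⟨i0, hi0⟩ : ∃ i, w i ≠ 0 := Function.ne_iff.mp hw
  have hd : (0:ℝ) < (d:ℝ) := by exact_mod_cast i0.pos
  have hsum : ∀ r : ℝ, ∑ i : Fin (d+d), |Fin.append w w i| ^ r = 2 * ∑ i, |w i| ^ r := by
    intro r
    rw [Fin.sum_univ_add]
    simp [Fin.append_left, Fin.append_right, Fin.append, Fin.addCases]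
    ring
  have hS : ∀ r : ℝ, 0 < r → lnorm r (Fin.append w w) = 2 ^ (1/r) * lnorm r w := by
    intro r hr
    unfold lnorm
    rw [hsum, Real.mul_rpow (by norm_num) (by positivity)]
  have hsq : 0 < ∑ i, |w i| ^ q := by
    apply Finset.sum_pos' (fun i _ => by positivity)
    exact ⟨i0, Finset.mem_univ _, Real.rpow_pos_of_pos (abs_pos.2 hi0) _⟩
  have hLq : 0 < lnorm q w := Real.rpow_pos_of_pos hsq _
  have hq0 : (0:ℝ) < q := by linarith
  unfold PQI
  rw [hS p hp, hS q hq0]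
  push_cast
  rw [show ((d:ℝ)+d) = 2*d by ring, Real.mul_rpow (by norm_num) hd.le]
  have key : (2:ℝ) ^ ((p-q)/(q*p)) * 2 ^ (1/p) = 2 ^ (1/q) := by
    rw [← Real.rpow_add two_pos]; congr 1; field_simp; ring
  field_simp
  linear_combination (-(d:ℝ) ^ ((p-q)/(q*p)) * lnorm p w) * key
end

section
/- The PQ Index satisfies the Babies property: for any non-zero vector w ∈ ℝ^d with at least two distinct values among |w_i|, appending a zero coordinate strictly increases the PQ Index: I_{p,q}([w_1, ..., w_d, 0]) > I_{p,q}(w) whenever w has a non-zero coordinate. -/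
open Finset

lemma lnorm_snoc {d : ℕ} (r : ℝ) (hr : r ≠ 0) (w : Fin d → ℝ) :
    lnorm r (Fin.snoc w 0) = lnorm r w := by
  unfold lnorm
  congr 1
  rw [Fin.sum_univ_castSucc]
  simp [Real.zero_rpow hr]

lemma lnorm_pos {d : ℕ} (r : ℝ) (hr : 0 < r) (w : Fin d → ℝ) (hw : w ≠ 0) :
    0 < lnorm r w := by
  obtain ⟨i, hi⟩ := Function.ne_iff.mp hw
  have hsum : 0 < ∑ j, |w j| ^ r := by
    apply Finset.sum_pos' (fun j _ => Real.rpow_nonneg (abs_nonneg _) _)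
    exact ⟨i, Finset.mem_univ i, Real.rpow_pos_of_pos (abs_pos.mpr hi) r⟩
  exact Real.rpow_pos_of_pos hsum _

theorem stmt6 {d : ℕ} (p q : ℝ) (hp : 0 < p) (hp1 : p ≤ 1) (hq : 1 < q)
    (w : Fin d → ℝ) (hw : w ≠ 0) (hdist : ∃ i j, |w i| ≠ |w j|) :
    PQI p q w < PQI p q (Fin.snoc w 0) := by
  have hq0 : (0:ℝ) < q := lt_trans one_pos hq
  have hd : 0 < d := by
    rcases Nat.eq_zero_or_pos d with h | h
    · exfalso; apply hw; subst h; ext i; exact absurd i.2 (by simp)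
    · exact h
  have hα : 1 / q - 1 / p < 0 := by
    have h1 : 1 / q < 1 := by rw [div_lt_one hq0]; exact hq
    have h2 : 1 ≤ 1 / p := by rw [le_div_iff₀ hp]; linarith
    linarith
  have hlp : 0 < lnorm p w := lnorm_pos p hp w hw
  have hlq : 0 < lnorm q w := lnorm_pos q hq0 w hw
  unfold PQI
  rw [lnorm_snoc p (ne_of_gt hp) w, lnorm_snoc q (ne_of_gt hq0) w]
  have hbase : ((d:ℝ)+1) ^ (1/q - 1/p) < (d:ℝ) ^ (1/q - 1/p) := by
    apply Real.rpow_lt_rpow_of_neg (by exact_mod_cast hd) (by linarith) hα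
  have hA : 0 < lnorm p w / lnorm q w := div_pos hlp hlq
  push_cast
  have := mul_lt_mul_of_pos_right hbase hA
  rw [← mul_div_assoc, ← mul_div_assoc] at this
  linarith
end

section
/- (PQI-bound on pruning) Let w ∈ ℝ^d be non-zero, 0 < p ≤ 1 < q, M_r the set of indices of the r coordinates of w with largest absolute values, and η_r ≥ 0 a constant such that Σ_{i ∉ M_r} |w_i|^p ≤ η_r Σ_{i ∈ M_r} |w_i|^p. Then r ≥ d (1 + η_r)^{-q/(q-p)} (1 - I_{p,q}(w))^{qp/(q-p)}. -/
open Finset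

theorem stmt7 {d : ℕ} (p q : ℝ) (hp : 0 < p) (hp1 : p ≤ 1) (hq : 1 < q)
    (w : Fin d → ℝ) (hw : w ≠ 0) (r : ℕ) (M : Finset (Fin d)) (hcard : M.card = r)
    (hM : ∀ i ∈ M, ∀ j ∉ M, |w j| ≤ |w i|)
    (η : ℝ) (hη : 0 ≤ η) (hηr : ∑ i ∈ Mᶜ, |w i| ^ p ≤ η * ∑ i ∈ M, |w i| ^ p) :
    (r : ℝ) ≥ (d : ℝ) * (1 + η) ^ (-(q / (q - p))) * (1 - PQI p q w) ^ (q * p / (q - p)) := by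
  have hq0 : (0:ℝ) < q := lt_trans one_pos hq
  have hpq : p < q := lt_of_le_of_lt hp1 hq
  have hqp : (0:ℝ) < q - p := sub_pos.2 hpq
  obtain ⟨i0, hi0⟩ : ∃ i, w i ≠ 0 := by
    by_contra h
    push_neg at h
    exact hw (funext fun i => h i)
  set Sp : ℝ := ∑ i, |w i| ^ p with hSp_def
  set Sq : ℝ := ∑ i, |w i| ^ q with hSq_def
  set SM : ℝ := ∑ i ∈ M, |w i| ^ p with hSM_def
  have hterm_p : ∀ i : Fin d, (0:ℝ) ≤ |w i| ^ p := fun i =>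
    Real.rpow_nonneg (abs_nonneg _) _
  have hterm_q : ∀ i : Fin d, (0:ℝ) ≤ |w i| ^ q := fun i =>
    Real.rpow_nonneg (abs_nonneg _) _
  have hSp : 0 < Sp := by
    apply Finset.sum_pos' (fun i _ => hterm_p i)
    exact ⟨i0, Finset.mem_univ _, Real.rpow_pos_of_pos (abs_pos.2 hi0) _⟩
  have hSq : 0 < Sq := by
    apply Finset.sum_pos' (fun i _ => hterm_q i)
    exact ⟨i0, Finset.mem_univ _, Real.rpow_pos_of_pos (abs_pos.2 hi0) _⟩
  have hd : (0:ℝ) < d := by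
    have : 0 < d := Fin.pos_iff_nonempty.2 ⟨i0⟩
    exact_mod_cast this
  have h1η : (0:ℝ) < 1 + η := by linarith
  -- r is positive
  have hrpos : 0 < r := by
    rcases Nat.eq_zero_or_pos r with h0 | h
    · exfalso
      have hM0 : M = ∅ := Finset.card_eq_zero.1 (by rw [hcard, h0])
      have hSM0 : SM = 0 := by rw [hSM_def, hM0]; simp
      have hcomp : ∑ i ∈ Mᶜ, |w i| ^ p = Sp := by
        rw [hSp_def, hM0]; simp
      rw [hcomp, hSM0, mul_zero] at hηr
      linarith
    · exact h
  have hr0 : (0:ℝ) < (r:ℝ) := by exact_mod_cast hrpos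
  -- Step A : Sp ≤ (1+η) * SM
  have hA1 : Sp ≤ (1 + η) * SM := by
    have hsplit : SM + ∑ i ∈ Mᶜ, |w i| ^ p = Sp :=
      Finset.sum_add_sum_compl M _
    nlinarith [hηr]
  -- Step B : SM ≤ r^(1-p/q) * Sq^(p/q)
  have hB1 : SM ≤ (r:ℝ) ^ (1 - p/q) * Sq ^ (p/q) := by
    have hqp1 : (1:ℝ) ≤ q / p := (one_le_div hp).2 (le_of_lt hpq)
    have hmean := Real.arith_mean_le_rpow_mean M (fun _ => (r:ℝ)⁻¹)
      (fun i => |w i| ^ p) (fun i _ => by positivity)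
      (by simp [Finset.sum_const, hcard]; field_simp)
      (fun i _ => hterm_p i) hqp1
    have hz : ∀ i : Fin d, (|w i| ^ p) ^ (q/p) = |w i| ^ q := by
      intro i
      rw [← Real.rpow_mul (abs_nonneg _)]
      congr 1
      field_simp
    have h1d : 1 / (q / p) = p / q := one_div_div q p
    rw [h1d] at hmean
    have hl : ∑ i ∈ M, (r:ℝ)⁻¹ * |w i| ^ p = (r:ℝ)⁻¹ * SM := by
      rw [hSM_def, Finset.mul_sum]
    have hrr : ∑ i ∈ M, (r:ℝ)⁻¹ * (|w i| ^ p) ^ (q/p) = (r:ℝ)⁻¹ * ∑ i ∈ M, |w i| ^ q := by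
      rw [Finset.mul_sum]
      exact Finset.sum_congr rfl fun i _ => by rw [hz]
    rw [hl, hrr] at hmean
    have hsub : ∑ i ∈ M, |w i| ^ q ≤ Sq :=
      Finset.sum_le_sum_of_subset_of_nonneg (Finset.subset_univ M)
        (fun i _ _ => hterm_q i)
    have hmean2 : (r:ℝ)⁻¹ * SM ≤ ((r:ℝ)⁻¹ * Sq) ^ (p/q) := by
      refine hmean.trans (Real.rpow_le_rpow (by positivity) ?_ (by positivity))
      exact mul_le_mul_of_nonneg_left hsub (by positivity)
    have hexp : ((r:ℝ)⁻¹ * Sq) ^ (p/q) = (r:ℝ)⁻¹ ^ (p/q) * Sq ^ (p/q) :=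
      Real.mul_rpow (by positivity) hSq.le
    rw [hexp] at hmean2
    have hstep : SM ≤ (r:ℝ) * ((r:ℝ)⁻¹ ^ (p/q) * Sq ^ (p/q)) := by
      have h3 := mul_le_mul_of_nonneg_left hmean2 hr0.le
      calc SM = (r:ℝ) * ((r:ℝ)⁻¹ * SM) := by field_simp
        _ ≤ _ := h3
    have hneg : ((r:ℝ)⁻¹) ^ (p/q) = (r:ℝ) ^ (-(p/q)) := by
      rw [Real.inv_rpow hr0.le, Real.rpow_neg hr0.le]
    have hone : (r:ℝ) * (r:ℝ) ^ (-(p/q)) = (r:ℝ) ^ (1 - p/q) := by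
      rw [show (1 - p/q) = 1 + -(p/q) by ring, Real.rpow_add hr0, Real.rpow_one]
    refine hstep.trans (le_of_eq ?_)
    rw [hneg, ← hone]
    ring
  -- combined key inequality
  have key : Sp ≤ (1 + η) * ((r:ℝ) ^ (1 - p/q) * Sq ^ (p/q)) := by
    calc Sp ≤ (1 + η) * SM := hA1
      _ ≤ _ := by
        apply mul_le_mul_of_nonneg_left hB1 h1η.le
  set A : ℝ := q / (q - p) with hA_def
  set B : ℝ := p / (q - p) with hB_def
  have hApos : 0 < A := div_pos hq0 hqp
  -- raise key to power A
  have main : Sp ^ A ≤ (1 + η) ^ A * (r:ℝ) * Sq ^ B := by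
    have h1 : Sp ^ A ≤ ((1 + η) * ((r:ℝ) ^ (1 - p/q) * Sq ^ (p/q))) ^ A :=
      Real.rpow_le_rpow hSp.le key hApos.le
    refine h1.trans (le_of_eq ?_)
    have hy1 : (0:ℝ) ≤ (r:ℝ) ^ (1 - p/q) := Real.rpow_nonneg hr0.le _
    have hy2 : (0:ℝ) ≤ Sq ^ (p/q) := Real.rpow_nonneg hSq.le _
    rw [Real.mul_rpow h1η.le (mul_nonneg hy1 hy2),
        Real.mul_rpow hy1 hy2,
        ← Real.rpow_mul hr0.le, ← Real.rpow_mul hSq.le]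
    have e1 : (1 - p/q) * A = 1 := by
      rw [hA_def]; field_simp
    have e2 : (p/q) * A = B := by
      rw [hA_def, hB_def]
      rw [div_mul_div_comm, mul_comm p q, mul_div_mul_left _ _ (ne_of_gt hq0)]
    rw [e1, e2, Real.rpow_one]
    ring
  -- rewrite 1 - PQI
  have h1PQI : 1 - PQI p q w = (d:ℝ) ^ (1/q - 1/p) * Sp ^ (1/p) / Sq ^ (1/q) := by
    simp only [PQI, lnorm, hSp_def, hSq_def]
    ring
  have hprod : (1 - PQI p q w) ^ (q * p / (q - p)) = (d:ℝ)⁻¹ * (Sp ^ A / Sq ^ B) := by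
    have hx1 : (0:ℝ) ≤ (d:ℝ) ^ (1/q - 1/p) := Real.rpow_nonneg hd.le _
    have hx2 : (0:ℝ) ≤ Sp ^ (1/p) := Real.rpow_nonneg hSp.le _
    have hx3 : (0:ℝ) ≤ Sq ^ (1/q) := Real.rpow_nonneg hSq.le _
    rw [h1PQI, Real.div_rpow (mul_nonneg hx1 hx2) hx3,
        Real.mul_rpow hx1 hx2,
        ← Real.rpow_mul hd.le, ← Real.rpow_mul hSp.le, ← Real.rpow_mul hSq.le]
    have e1 : (1/q - 1/p) * (q * p / (q - p)) = -1 := by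
      field_simp; ring
    have e2 : (1/p) * (q * p / (q - p)) = A := by
      rw [hA_def]; field_simp
    have e3 : (1/q) * (q * p / (q - p)) = B := by
      rw [hB_def]; field_simp
    rw [e1, e2, e3, Real.rpow_neg_one]
    ring
  rw [ge_iff_le, hprod, Real.rpow_neg h1η.le]
  have hSqB : (0:ℝ) < Sq ^ B := Real.rpow_pos_of_pos hSq _
  have h1ηA : (0:ℝ) < (1 + η) ^ A := Real.rpow_pos_of_pos h1η _
  have hdne : (d:ℝ) ≠ 0 := ne_of_gt hd
  rw [show (d:ℝ) * ((1 + η) ^ A)⁻¹ * ((d:ℝ)⁻¹ * (Sp ^ A / Sq ^ B))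
      = Sp ^ A / ((1 + η) ^ A * Sq ^ B) by field_simp]
  rw [div_le_iff₀ (by positivity)]
  calc Sp ^ A ≤ (1 + η) ^ A * (r:ℝ) * Sq ^ B := main
    _ = (r:ℝ) * ((1 + η) ^ A * Sq ^ B) := by ring
end

section
/- For positive reals w_1, ..., w_d that are not all equal, the function h(t) = (Σᵢ w_i^{t-1}) / (Σᵢ w_i^t) is strictly decreasing in t for t > 0; in particular its derivative satisfies h'(t) = [Σ_{1 ≤ i < j ≤ d} (w_j - w_i)(ln w_i - ln w_j) w_i^{t-1} w_j^{t-1}] / (Σᵢ w_i^t)² < 0. -/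
open Finset

/-- Symmetrization of a double sum with vanishing diagonal. -/
lemma sym_sum {d : ℕ} (f : Fin d → Fin d → ℝ) (h0 : ∀ i, f i i = 0) :
    ∑ i, ∑ j, f i j
      = ∑ i, ∑ j ∈ univ.filter (fun j => i < j), (f i j + f j i) := by
  have key : ∀ i : Fin d, ∑ j, f i j
      = ∑ j ∈ univ.filter (fun j => i < j), f i j
        + ∑ j ∈ univ.filter (fun j => j < i), f i j := by
    intro i
    rw [← Finset.sum_filter_add_sum_filter_not univ (fun j => i < j) (f i)]
    congr 1
    have hset : univ.filter (fun j => ¬ i < j)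
        = insert i (univ.filter (fun j : Fin d => j < i)) := by
      ext j
      simp only [mem_filter, mem_univ, true_and, mem_insert, not_lt]
      constructor
      · intro h
        rcases h.lt_or_eq with h' | h'
        · exact Or.inr h'
        · exact Or.inl h'
      · rintro (rfl | h)
        · exact le_rfl
        · exact h.le
    rw [hset, Finset.sum_insert (by simp), h0 i, zero_add]
  calc ∑ i, ∑ j, f i j
      = ∑ i, ∑ j ∈ univ.filter (fun j => i < j), f i j
        + ∑ i, ∑ j ∈ univ.filter (fun j => j < i), f i j := by
        rw [← Finset.sum_add_distrib]; exact Finset.sum_congr rfl fun i _ => key i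
    _ = ∑ i, ∑ j ∈ univ.filter (fun j => i < j), f i j
        + ∑ i, ∑ j ∈ univ.filter (fun j => i < j), f j i := by
        congr 1
        exact Finset.sum_comm' fun x y => by simp [and_comm]
    _ = ∑ i, ∑ j ∈ univ.filter (fun j => i < j), (f i j + f j i) := by
        rw [← Finset.sum_add_distrib]
        exact Finset.sum_congr rfl fun i _ => (Finset.sum_add_distrib).symm

theorem stmt9 {d : ℕ} (w : Fin d → ℝ) (hw : ∀ i, 0 < w i) (hne : ∃ i j, w i ≠ w j) :
    StrictAntiOn (fun t : ℝ => (∑ i, w i ^ (t - 1)) / (∑ i, w i ^ t)) (Set.Ioi 0) ∧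
    ∀ t : ℝ, 0 < t →
      HasDerivAt (fun t : ℝ => (∑ i, w i ^ (t - 1)) / (∑ i, w i ^ t))
        ((∑ i, ∑ j ∈ univ.filter (fun j => i < j),
            (w j - w i) * (Real.log (w i) - Real.log (w j)) * w i ^ (t - 1) * w j ^ (t - 1)) /
          (∑ i, w i ^ t) ^ 2) t ∧
      (∑ i, ∑ j ∈ univ.filter (fun j => i < j),
          (w j - w i) * (Real.log (w i) - Real.log (w j)) * w i ^ (t - 1) * w j ^ (t - 1)) /
        (∑ i, w i ^ t) ^ 2 < 0 := by
  obtain ⟨i0, j0, hne0⟩ := hne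
  haveI : Nonempty (Fin d) := ⟨i0⟩
  have hB : ∀ t : ℝ, 0 < ∑ i, w i ^ t := fun t =>
    Finset.sum_pos (fun i _ => Real.rpow_pos_of_pos (hw i) t) univ_nonempty
  have epow : ∀ (k : Fin d) (t : ℝ), w k ^ t = w k ^ (t - 1) * w k := by
    intro k t
    have h := Real.rpow_add_one (hw k).ne' (t - 1)
    rwa [sub_add_cancel] at h
  -- the derivative at every real t
  have key : ∀ t : ℝ, HasDerivAt (fun t : ℝ => (∑ i, w i ^ (t - 1)) / (∑ i, w i ^ t))
      ((∑ i, ∑ j ∈ univ.filter (fun j => i < j),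
          (w j - w i) * (Real.log (w i) - Real.log (w j)) * w i ^ (t - 1) * w j ^ (t - 1)) /
        (∑ i, w i ^ t) ^ 2) t := by
    intro t
    have hA : HasDerivAt (fun t : ℝ => ∑ i, w i ^ (t - 1))
        (∑ i, w i ^ (t - 1) * Real.log (w i)) t := by
      apply HasDerivAt.fun_sum
      intro i _
      have h1 := (Real.hasStrictDerivAt_const_rpow (hw i) (t - 1)).hasDerivAt
      have h2 : HasDerivAt (fun t : ℝ => t - 1) 1 t := (hasDerivAt_id t).sub_const 1
      have h3 : HasDerivAt (fun y : ℝ => w i ^ (y - 1)) (w i ^ (t - 1) * Real.log (w i) * 1) t :=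
        h1.comp t h2
      simpa using h3
    have hBd : HasDerivAt (fun t : ℝ => ∑ i, w i ^ t)
        (∑ i, w i ^ t * Real.log (w i)) t :=
      HasDerivAt.fun_sum fun i _ => (Real.hasStrictDerivAt_const_rpow (hw i) t).hasDerivAt
    have hdiv := hA.div hBd (hB t).ne'
    convert hdiv using 2
    case e'_4 => rfl
    case e'_5 => rfl
    case e'_8 => rfl
    -- numerator identity
    have expand : (∑ i, w i ^ (t - 1) * Real.log (w i)) * (∑ i, w i ^ t)
        - (∑ i, w i ^ (t - 1)) * (∑ i, w i ^ t * Real.log (w i))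
        = ∑ i, ∑ j, (w i ^ (t - 1) * Real.log (w i) * w j ^ t
            - w i ^ (t - 1) * (w j ^ t * Real.log (w j))) := by
      rw [Finset.sum_mul_sum, Finset.sum_mul_sum, ← Finset.sum_sub_distrib]
      exact Finset.sum_congr rfl fun i _ => (Finset.sum_sub_distrib _ _).symm
    rw [expand, sym_sum _ (fun i => by ring)]
    refine Finset.sum_congr rfl fun i _ => Finset.sum_congr rfl fun j _ => ?_
    rw [epow i t, epow j t]
    ring
  -- negativity of the derivative at every real t
  have hterm : ∀ (t : ℝ) (i j : Fin d),
      (w j - w i) * (Real.log (w i) - Real.log (w j)) * w i ^ (t - 1) * w j ^ (t - 1) ≤ 0 := by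
    intro t i j
    have hp : 0 < w i ^ (t - 1) * w j ^ (t - 1) :=
      mul_pos (Real.rpow_pos_of_pos (hw i) _) (Real.rpow_pos_of_pos (hw j) _)
    have h1 : (w j - w i) * (Real.log (w i) - Real.log (w j)) ≤ 0 := by
      rcases le_total (w i) (w j) with h | h
      · exact mul_nonpos_of_nonneg_of_nonpos (by linarith)
          (by have := Real.log_le_log (hw i) h; linarith)
      · exact mul_nonpos_of_nonpos_of_nonneg (by linarith)
          (by have := Real.log_le_log (hw j) h; linarith)
    calc (w j - w i) * (Real.log (w i) - Real.log (w j)) * w i ^ (t - 1) * w j ^ (t - 1)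
        = ((w j - w i) * (Real.log (w i) - Real.log (w j))) * (w i ^ (t - 1) * w j ^ (t - 1)) := by
          ring
      _ ≤ 0 := mul_nonpos_of_nonpos_of_nonneg h1 hp.le
  have hneg : ∀ t : ℝ,
      (∑ i, ∑ j ∈ univ.filter (fun j => i < j),
          (w j - w i) * (Real.log (w i) - Real.log (w j)) * w i ^ (t - 1) * w j ^ (t - 1)) /
        (∑ i, w i ^ t) ^ 2 < 0 := by
    intro t
    -- find an ordered witness pair
    obtain ⟨a, b, hab, hwab⟩ : ∃ a b : Fin d, a < b ∧ w a ≠ w b := by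
      rcases lt_or_gt_of_ne (fun h : i0 = j0 => hne0 (by rw [h])) with h | h
      · exact ⟨i0, j0, h, hne0⟩
      · exact ⟨j0, i0, h, hne0.symm⟩
    have hstrict : (w b - w a) * (Real.log (w a) - Real.log (w b))
        * w a ^ (t - 1) * w b ^ (t - 1) < 0 := by
      have hp : 0 < w a ^ (t - 1) * w b ^ (t - 1) :=
        mul_pos (Real.rpow_pos_of_pos (hw a) _) (Real.rpow_pos_of_pos (hw b) _)
      have h1 : (w b - w a) * (Real.log (w a) - Real.log (w b)) < 0 := by
        rcases lt_or_gt_of_ne hwab with h | h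
        · exact mul_neg_of_pos_of_neg (by linarith)
            (by have := Real.log_lt_log (hw a) h; linarith)
        · exact mul_neg_of_neg_of_pos (by linarith)
            (by have := Real.log_lt_log (hw b) h; linarith)
      calc (w b - w a) * (Real.log (w a) - Real.log (w b)) * w a ^ (t - 1) * w b ^ (t - 1)
          = ((w b - w a) * (Real.log (w a) - Real.log (w b)))
            * (w a ^ (t - 1) * w b ^ (t - 1)) := by ring
        _ < 0 := mul_neg_of_neg_of_pos h1 hp
    have hFle : ∀ i : Fin d, (∑ j ∈ univ.filter (fun j => i < j),
        (w j - w i) * (Real.log (w i) - Real.log (w j)) * w i ^ (t - 1) * w j ^ (t - 1)) ≤ 0 :=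
      fun i => Finset.sum_nonpos fun j _ => hterm t i j
    have hFa : (∑ j ∈ univ.filter (fun j => a < j),
        (w j - w a) * (Real.log (w a) - Real.log (w j)) * w a ^ (t - 1) * w j ^ (t - 1)) < 0 := by
      have := Finset.sum_lt_sum (f := fun j =>
          (w j - w a) * (Real.log (w a) - Real.log (w j)) * w a ^ (t - 1) * w j ^ (t - 1))
        (g := fun _ => (0 : ℝ)) (s := univ.filter (fun j => a < j))
        (fun j _ => hterm t a j) ⟨b, by simp [hab], hstrict⟩
      simpa using this
    have hN : (∑ i, ∑ j ∈ univ.filter (fun j => i < j),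
        (w j - w i) * (Real.log (w i) - Real.log (w j)) * w i ^ (t - 1) * w j ^ (t - 1)) < 0 := by
      have := Finset.sum_lt_sum (f := fun i => ∑ j ∈ univ.filter (fun j => i < j),
          (w j - w i) * (Real.log (w i) - Real.log (w j)) * w i ^ (t - 1) * w j ^ (t - 1))
        (g := fun _ => (0 : ℝ)) (s := univ)
        (fun i _ => hFle i) ⟨a, mem_univ a, hFa⟩
      simpa using this
    exact div_neg_of_neg_of_pos hN (pow_pos (hB t) 2)
  refine ⟨?_, fun t _ => ⟨key t, hneg t⟩⟩
  apply strictAntiOn_of_deriv_neg (convex_Ioi 0)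
  · exact fun x _ => (key x).continuousAt.continuousWithinAt
  · intro x hx
    rw [(key x).deriv]
    exact hneg x
end

section
/- (Rising Tide) For 0 < p ≤ 1 < q, a vector w ∈ ℝ^d with strictly positive coordinates not all equal, and any α > 0, adding α to every coordinate strictly decreases the PQ Index: I_{p,q}(w + α·𝟙) < I_{p,q}(w). -/
open Finset

/-- Two-point concavity of `x ↦ x ^ p` for `0 < p ≤ 1` on nonnegative reals. -/
lemma two_conc {p a b t : ℝ} (hp : 0 < p) (hp1 : p ≤ 1) (ha : 0 ≤ a) (hb : 0 ≤ b)
    (ht : 0 ≤ t) (ht1 : t ≤ 1) :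
    t * a ^ p + (1 - t) * b ^ p ≤ (t * a + (1 - t) * b) ^ p := by
  have h1p : (1 : ℝ) ≤ 1 / p := by
    rw [le_div_iff₀ hp]
    linarith
  have h := Real.arith_mean_le_rpow_mean (Finset.univ : Finset (Fin 2)) ![t, 1 - t]
      ![a ^ p, b ^ p] (by
        intro i _
        fin_cases i <;> simp [ht, sub_nonneg.2 ht1])
      (by simp [Fin.sum_univ_two])
      (by
        intro i _
        fin_cases i <;> simp [Real.rpow_nonneg, ha, hb]) h1p
  simp only [Fin.sum_univ_two, Matrix.cons_val_zero, Matrix.cons_val_one, Matrix.head_cons] at h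
  rw [one_div_one_div] at h
  rw [one_div, Real.rpow_rpow_inv ha hp.ne', Real.rpow_rpow_inv hb hp.ne'] at h
  exact h

set_option maxHeartbeats 1000000 in
theorem stmt10 {d : ℕ} (p q : ℝ) (hp : 0 < p) (hp1 : p ≤ 1) (hq : 1 < q)
    (w : Fin d → ℝ) (hw : ∀ i, 0 < w i) (hne : ∃ i j, w i ≠ w j) (α : ℝ) (hα : 0 < α) :
    PQI p q (fun i => w i + α) < PQI p q w := by
  classical
  obtain ⟨i0, j0, hij⟩ := hne
  have hd : 0 < d := i0.pos
  have hdR : (0 : ℝ) < d := by exact_mod_cast hd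
  have hq0 : 0 < q := lt_trans one_pos hq
  set A : ℝ := ∑ i, (w i) ^ p with hA
  set B : ℝ := ∑ i, (w i) ^ q with hB
  have hApos : 0 < A := Finset.sum_pos (fun i _ => Real.rpow_pos_of_pos (hw i) p) ⟨i0, mem_univ i0⟩
  have hBpos : 0 < B := Finset.sum_pos (fun i _ => Real.rpow_pos_of_pos (hw i) q) ⟨i0, mem_univ i0⟩
  set a : ℝ := A ^ (1/p) with ha
  set b : ℝ := B ^ (1/q) with hb
  have hapos : 0 < a := Real.rpow_pos_of_pos hApos _
  have hbpos : 0 < b := Real.rpow_pos_of_pos hBpos _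
  have hap : a ^ p = A := by rw [ha, one_div, Real.rpow_inv_rpow hApos.le hp.ne']
  have hbq : b ^ q = B := by rw [hb, one_div, Real.rpow_inv_rpow hBpos.le hq0.ne']
  have hlnp : lnorm p w = a := by
    simp only [lnorm, ha, hA]
    congr 1
    exact Finset.sum_congr rfl fun i _ => by rw [abs_of_pos (hw i)]
  have hlnq : lnorm q w = b := by
    simp only [lnorm, hb, hB]
    congr 1
    exact Finset.sum_congr rfl fun i _ => by rw [abs_of_pos (hw i)]
  set G : ℝ := α * (d : ℝ) ^ (1/p) with hG
  set H : ℝ := α * (d : ℝ) ^ (1/q) with hH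
  have hGpos : 0 < G := mul_pos hα (Real.rpow_pos_of_pos hdR _)
  have hHpos : 0 < H := mul_pos hα (Real.rpow_pos_of_pos hdR _)
  have hGp : G ^ p = α ^ p * d := by
    rw [hG, Real.mul_rpow hα.le (Real.rpow_nonneg hdR.le _), one_div,
      Real.rpow_inv_rpow hdR.le hp.ne']
  -- Step C : strict power mean inequality  a * d^(1/q) < b * d^(1/p)
  have hqp1 : 1 < q / p := by
    rw [lt_div_iff₀ hp]
    nlinarith
  have hjensen : ((d : ℝ)⁻¹ * A) ^ (q / p) < (d : ℝ)⁻¹ * B := by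
    have hmem : ∀ i ∈ (univ : Finset (Fin d)), (w i) ^ p ∈ Set.Ici (0 : ℝ) :=
      fun i _ => Real.rpow_nonneg (hw i).le p
    have hpne : (w i0) ^ p ≠ (w j0) ^ p := by
      intro hyp
      apply hij
      have h2 := congrArg (fun x : ℝ => x ^ (1/p)) hyp
      simpa [one_div, Real.rpow_rpow_inv (hw i0).le hp.ne',
        Real.rpow_rpow_inv (hw j0).le hp.ne'] using h2
    have h := (strictConvexOn_rpow hqp1).map_sum_lt (t := univ)
      (w := fun _ : Fin d => (d : ℝ)⁻¹) (p := fun i => (w i) ^ p)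
      (fun i _ => by positivity)
      (by
        rw [Finset.sum_const, Finset.card_univ, Fintype.card_fin, nsmul_eq_mul]
        field_simp)
      hmem ⟨i0, mem_univ i0, j0, mem_univ j0, hpne⟩
    simp only [smul_eq_mul] at h
    rw [← Finset.mul_sum, ← Finset.mul_sum] at h
    calc ((d : ℝ)⁻¹ * A) ^ (q / p) < (d : ℝ)⁻¹ * ∑ i, ((w i) ^ p) ^ (q / p) := h
      _ = (d : ℝ)⁻¹ * B := by
          rw [hB]
          congr 1
          refine Finset.sum_congr rfl fun i _ => ?_
          rw [← Real.rpow_mul (hw i).le]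
          congr 1
          field_simp
  have hC : a * (d : ℝ) ^ (1/q) < b * (d : ℝ) ^ (1/p) := by
    have hdr : 0 < (d : ℝ) ^ (q / p) := Real.rpow_pos_of_pos hdR _
    have key : A ^ (q/p) * d < (d : ℝ) ^ (q/p) * B := by
      have h2 : ((d : ℝ) ^ (q/p))⁻¹ * A ^ (q/p) < (d : ℝ)⁻¹ * B := by
        rw [← Real.inv_rpow hdR.le, ← Real.mul_rpow (by positivity) hApos.le]
        exact hjensen
      have h3 := mul_lt_mul_of_pos_left h2 (mul_pos hdR hdr)
      calc A ^ (q/p) * d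
          = ((d : ℝ) * (d : ℝ) ^ (q/p)) * (((d : ℝ) ^ (q/p))⁻¹ * A ^ (q/p)) := by
            field_simp
        _ < ((d : ℝ) * (d : ℝ) ^ (q/p)) * ((d : ℝ)⁻¹ * B) := by
            exact mul_lt_mul_of_pos_left h2 (by positivity)
        _ = (d : ℝ) ^ (q/p) * B := by
            field_simp
    have eL : (a * (d : ℝ) ^ (1/q)) ^ q = A ^ (q/p) * d := by
      rw [Real.mul_rpow hapos.le (Real.rpow_nonneg hdR.le _), ha,
        ← Real.rpow_mul hApos.le, ← Real.rpow_mul hdR.le,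
        show (1/p) * q = q/p by ring, show (1/q) * q = 1 by field_simp, Real.rpow_one]
    have eR : (b * (d : ℝ) ^ (1/p)) ^ q = B * (d : ℝ) ^ (q/p) := by
      rw [Real.mul_rpow hbpos.le (Real.rpow_nonneg hdR.le _), hbq,
        ← Real.rpow_mul hdR.le, show (1/p) * q = q/p by ring]
    rw [← Real.rpow_lt_rpow_iff (by positivity) (by positivity) hq0, eL, eR]
    linarith [key]
  -- positivity of shifted vector
  have hu : ∀ i, 0 < w i + α := fun i => by linarith [hw i, hα]
  set S : ℝ := ∑ i, (w i + α) ^ p with hS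
  have hlnpu : lnorm p (fun i => w i + α) = S ^ (1/p) := by
    simp only [lnorm, hS]
    congr 1
    exact Finset.sum_congr rfl fun i _ => by rw [abs_of_pos (hu i)]
  -- Step A : reverse Minkowski  a + G ≤ lnorm p (w + α)
  have hrev : a + G ≤ lnorm p (fun i => w i + α) := by
    have hag : 0 < a + G := by linarith
    set t : ℝ := a / (a + G) with htdef
    have ht : 0 ≤ t := by positivity
    have ht1 : t ≤ 1 := by
      rw [htdef, div_le_one hag]
      linarith
    have hper : ∀ i, t * (w i / a) ^ p + (1 - t) * (α / G) ^ p ≤ (w i + α) ^ p / (a + G) ^ p := by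
      intro i
      have hane : a ≠ 0 := hapos.ne'
      have hGne : G ≠ 0 := hGpos.ne'
      have hagne : a + G ≠ 0 := hag.ne'
      have e1 : t * (w i / a) + (1 - t) * (α / G) = (w i + α) / (a + G) := by
        rw [htdef]
        field_simp
        ring
      have h2 := two_conc hp hp1 (div_nonneg (hw i).le hapos.le)
        (div_nonneg hα.le hGpos.le) ht ht1
      rw [e1, Real.div_rpow (hu i).le hag.le] at h2
      exact h2
    have hsumw : ∑ i, (w i / a) ^ p = 1 := by
      have hc : ∀ i ∈ (univ : Finset (Fin d)), (w i / a) ^ p = (w i) ^ p / a ^ p :=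
        fun i _ => Real.div_rpow (hw i).le hapos.le p
      rw [Finset.sum_congr rfl hc, ← Finset.sum_div, ← hA, hap, div_self hApos.ne']
    have hαG : (α / G) ^ p = 1 / d := by
      rw [Real.div_rpow hα.le hGpos.le, hGp, div_mul_eq_div_div,
        div_self (by positivity : (α:ℝ) ^ p ≠ 0)]
    have hone : (1 : ℝ) ≤ S / (a + G) ^ p := by
      have hchain : ∑ i, (t * (w i / a) ^ p + (1 - t) * (α / G) ^ p)
          ≤ ∑ i, (w i + α) ^ p / (a + G) ^ p :=
        Finset.sum_le_sum fun i _ => hper i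
      have hl : ∑ i, (t * (w i / a) ^ p + (1 - t) * (α / G) ^ p) = 1 := by
        rw [Finset.sum_add_distrib, ← Finset.mul_sum, hsumw, mul_one, Finset.sum_const,
          Finset.card_univ, Fintype.card_fin, hαG, nsmul_eq_mul]
        field_simp
        ring
      have hr : ∑ i, (w i + α) ^ p / (a + G) ^ p = S / (a + G) ^ p := by
        rw [hS, Finset.sum_div]
      rw [hl, hr] at hchain
      exact hchain
    have hSo : (a + G) ^ p ≤ S := (one_le_div (by positivity)).1 hone
    have h4 := Real.rpow_le_rpow (by positivity) hSo (by positivity : (0:ℝ) ≤ 1/p)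
    rwa [one_div, Real.rpow_rpow_inv hag.le hp.ne', ← one_div, ← hlnpu] at h4
  -- Step B : Minkowski  lnorm q (w + α) ≤ b + H
  have hmink : lnorm q (fun i => w i + α) ≤ b + H := by
    have h := Real.Lp_add_le (univ : Finset (Fin d)) w (fun _ => α) hq.le
    have e2 : (∑ _i : Fin d, |α| ^ q) ^ (1/q) = H := by
      rw [Finset.sum_const, Finset.card_univ, Fintype.card_fin, nsmul_eq_mul,
        abs_of_pos hα, Real.mul_rpow (by positivity) (by positivity),
        one_div, Real.rpow_rpow_inv hα.le hq0.ne', hH]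
      ring
    have e3 : (∑ i, |w i| ^ q) ^ (1/q) = b := hlnq
    rw [e2, e3] at h
    exact h
  have huqpos : 0 < lnorm q (fun i => w i + α) := by
    simp only [lnorm]
    apply Real.rpow_pos_of_pos
    refine Finset.sum_pos (fun i _ => ?_) ⟨i0, mem_univ i0⟩
    rw [abs_of_pos (hu i)]
    exact Real.rpow_pos_of_pos (hu i) q
  have hfrac : a / b < lnorm p (fun i => w i + α) / lnorm q (fun i => w i + α) := by
    have h1 : a / b < (a + G) / (b + H) := by
      rw [div_lt_div_iff₀ hbpos (by positivity)]
      have h2 := mul_lt_mul_of_pos_left hC hα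
      rw [hG, hH]
      nlinarith [h2]
    have h2 : (a + G) / (b + H) ≤ lnorm p (fun i => w i + α) / lnorm q (fun i => w i + α) := by
      refine div_le_div₀ (le_trans (by positivity) hrev) hrev huqpos hmink
    exact lt_of_lt_of_le h1 h2
  simp only [PQI, hlnp, hlnq]
  have hcpos : 0 < (d : ℝ) ^ (1/q - 1/p) := Real.rpow_pos_of_pos hdR _
  rw [mul_div_assoc, mul_div_assoc]
  exact sub_lt_sub_left (mul_lt_mul_of_pos_left hfrac hcpos) 1
end

section
/- (Robin Hood, derivative form) Let 0 < p ≤ 1 < q and w ∈ ℝ^d with w_1 > w_2 > 0 and all coordinates nonnegative. Define f(t) = (Σᵢ=1^d v_i(t)^q)^(1/q) / (Σᵢ=1^d v_i(t)^p)^(1/p), where v(t) = (w_1 - t, w_2 + t, w_3, ..., w_d). Then f'(0) = f(0)·[(−w_1^{q−1} + w_2^{q−1})/(Σᵢ w_i^q) − (−w_1^{p−1} + w_2^{p−1})/(Σᵢ w_i^p)] < 0. -/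
open Finset

theorem stmt11 {d : ℕ} (p q : ℝ) (hp : 0 < p) (hp1 : p ≤ 1) (hq : 1 < q)
    (w : Fin (d + 2) → ℝ) (hnn : ∀ i, 0 ≤ w i) (h12 : w 1 < w 0) (h2 : 0 < w 1)
    (v : ℝ → Fin (d + 2) → ℝ)
    (hv : v = fun t i => if i = 0 then w 0 - t else if i = 1 then w 1 + t else w i)
    (f : ℝ → ℝ)
    (hf : f = fun t => (∑ i, v t i ^ q) ^ (1 / q) / (∑ i, v t i ^ p) ^ (1 / p)) :
    HasDerivAt f
      (f 0 * ((-(w 0 ^ (q - 1)) + w 1 ^ (q - 1)) / (∑ i, w i ^ q) -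
        (-(w 0 ^ (p - 1)) + w 1 ^ (p - 1)) / (∑ i, w i ^ p))) 0 ∧
    f 0 * ((-(w 0 ^ (q - 1)) + w 1 ^ (q - 1)) / (∑ i, w i ^ q) -
      (-(w 0 ^ (p - 1)) + w 1 ^ (p - 1)) / (∑ i, w i ^ p)) < 0 := by
  have hq0 : (0:ℝ) < q := lt_trans one_pos hq
  have hw0 : 0 < w 0 := h2.trans h12
  set Cq : ℝ := ∑ i : Fin d, w i.succ.succ ^ q with hCq
  set Cp : ℝ := ∑ i : Fin d, w i.succ.succ ^ p with hCp
  have hsum : ∀ (u : Fin (d+2) → ℝ), ∑ i, u i = u 0 + u 1 + ∑ i : Fin d, u (i.succ.succ) := by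
    intro u
    rw [Fin.sum_univ_succ, Fin.sum_univ_succ, Fin.succ_zero_eq_one]
    ring
  have hCqnn : 0 ≤ Cq := Finset.sum_nonneg fun i _ =>
    Real.rpow_nonneg (hnn _) _
  have hCpnn : 0 ≤ Cp := Finset.sum_nonneg fun i _ =>
    Real.rpow_nonneg (hnn _) _
  set Nq : ℝ := w 0 ^ q + w 1 ^ q + Cq with hNq
  set Np : ℝ := w 0 ^ p + w 1 ^ p + Cp with hNp
  have hNqpos : 0 < Nq := by
    have := Real.rpow_pos_of_pos hw0 q
    have := Real.rpow_pos_of_pos h2 q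
    positivity
  have hNppos : 0 < Np := by
    have := Real.rpow_pos_of_pos hw0 p
    have := Real.rpow_pos_of_pos h2 p
    positivity
  have hsq : (∑ i, w i ^ q) = Nq := by rw [hsum]
  have hsp : (∑ i, w i ^ p) = Np := by rw [hsum]
  have hNt : ∀ t, ∑ i, v t i ^ q = (w 0 - t) ^ q + (w 1 + t) ^ q + Cq := by
    intro t
    rw [hsum]
    simp [hv, Fin.succ_ne_zero, Fin.succ_succ_ne_one]
    rfl
  have hPt : ∀ t, ∑ i, v t i ^ p = (w 0 - t) ^ p + (w 1 + t) ^ p + Cp := by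
    intro t
    rw [hsum]
    simp [hv, Fin.succ_ne_zero, Fin.succ_succ_ne_one]
    rfl
  have hfg : f = fun t => ((w 0 - t) ^ q + (w 1 + t) ^ q + Cq) ^ (1/q) /
      ((w 0 - t) ^ p + (w 1 + t) ^ p + Cp) ^ (1/p) := by
    funext t
    rw [hf]
    simp only [hNt t, hPt t]
  -- derivatives of inner sums
  have hd0 : HasDerivAt (fun t : ℝ => w 0 - t) (-1) 0 := by
    simpa using (hasDerivAt_id (0:ℝ)).const_sub (w 0)
  have hd1 : HasDerivAt (fun t : ℝ => w 1 + t) 1 0 := by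
    simpa using (hasDerivAt_id (0:ℝ)).const_add (w 1)
  have hA : ∀ r : ℝ, HasDerivAt (fun t : ℝ => (w 0 - t) ^ r + (w 1 + t) ^ r + (if r = q then Cq else Cp))
      (r * w 0 ^ (r-1) * (-1) + r * w 1 ^ (r-1) * 1) 0 := by
    intro r
    have h1 := hd0.rpow_const (p := r) (Or.inl (by simpa using hw0.ne'))
    have h2' := hd1.rpow_const (p := r) (Or.inl (by simpa using h2.ne'))
    simp only [sub_zero, add_zero] at h1 h2'
    refine ((h1.add h2').add_const (if r = q then Cq else Cp)).congr_deriv ?_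
    ring
  have hAq := hA q
  have hAp := hA p
  rw [if_pos rfl] at hAq
  rw [if_neg (by intro h; rw [h] at hp1; exact absurd hq (not_lt.mpr hp1))] at hAp
  have hBq := hAq.rpow_const (p := 1/q) (Or.inl (by norm_num; exact hNqpos.ne'))
  have hBp := hAp.rpow_const (p := 1/p) (Or.inl (by norm_num; exact hNppos.ne'))
  simp only [sub_zero, add_zero] at hBq hBp
  have hNppow : (0:ℝ) < Np ^ (1/p) := Real.rpow_pos_of_pos hNppos _
  have hNqpow : (0:ℝ) < Nq ^ (1/q) := Real.rpow_pos_of_pos hNqpos _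
  have hder := hBq.div hBp (by
    norm_num
    exact (Real.rpow_pos_of_pos hNppos _).ne')
  simp only [sub_zero, add_zero] at hder
  have hf0 : f 0 = Nq ^ (1/q) / Np ^ (1/p) := by
    rw [hfg]; norm_num
    rfl
  have hqne : q ≠ 0 := hq0.ne'
  have hpne : p ≠ 0 := hp.ne'
  have hNqne : Nq ≠ 0 := hNqpos.ne'
  have hNpne : Np ≠ 0 := hNppos.ne'
  have hNqpowne : Nq ^ (1/q) ≠ 0 := hNqpow.ne'
  have hNppowne : Np ^ (1/p) ≠ 0 := hNppow.ne'
  constructor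
  · have key : f 0 * ((-(w 0 ^ (q - 1)) + w 1 ^ (q - 1)) / (∑ i, w i ^ q) -
        (-(w 0 ^ (p - 1)) + w 1 ^ (p - 1)) / (∑ i, w i ^ p)) =
        ((q * w 0 ^ (q - 1) * -1 + q * w 1 ^ (q - 1) * 1) * (1 / q) * Nq ^ (1 / q - 1) *
          Np ^ (1 / p) - Nq ^ (1 / q) *
          ((p * w 0 ^ (p - 1) * -1 + p * w 1 ^ (p - 1) * 1) * (1 / p) * Np ^ (1 / p - 1))) /
        (Np ^ (1 / p)) ^ 2 := by
      rw [hf0, hsq, hsp]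
      rw [Real.rpow_sub hNqpos, Real.rpow_sub hNppos, Real.rpow_one]
      field_simp
      simp only [Real.rpow_one]
      ring
    rw [key, hfg]
    exact hder
  · rw [hf0, hsq, hsp]
    apply mul_neg_of_pos_of_neg
    · positivity
    · have ht1 : (-(w 0 ^ (q - 1)) + w 1 ^ (q - 1)) / Nq < 0 := by
        apply div_neg_of_neg_of_pos _ hNqpos
        have := Real.rpow_lt_rpow h2.le h12 (by linarith : (0:ℝ) < q - 1)
        linarith
      have ht2 : 0 ≤ (-(w 0 ^ (p - 1)) + w 1 ^ (p - 1)) / Np := by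
        apply div_nonneg _ hNppos.le
        have := Real.rpow_le_rpow_of_nonpos h2 h12.le (by linarith : p - 1 ≤ 0)
        linarith
      linarith
end

section
/- For w_1 > w_2 > 0 and 0 < p ≤ 1 ≤ q with p ≠ q, the quantity (−w_1^{q−1} + w_2^{q−1})/(Σᵢ=1^d w_i^q) − (−w_1^{p−1} + w_2^{p−1})/(Σᵢ=1^d w_i^p) is strictly negative, where all w_i ≥ 0. -/
open Finset

theorem stmt12 {d : ℕ} (p q : ℝ) (hp : 0 < p) (hp1 : p ≤ 1) (hq : 1 ≤ q) (hpq : p ≠ q)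
    (w : Fin (d + 2) → ℝ) (hnn : ∀ i, 0 ≤ w i) (h12 : w 1 < w 0) (h2 : 0 < w 1) :
    (-(w 0 ^ (q - 1)) + w 1 ^ (q - 1)) / (∑ i, w i ^ q) -
      (-(w 0 ^ (p - 1)) + w 1 ^ (p - 1)) / (∑ i, w i ^ p) < 0 := by
  have hw0 : 0 < w 0 := h2.trans h12
  have hdq : 0 < ∑ i, w i ^ q :=
    Finset.sum_pos' (fun i _ => Real.rpow_nonneg (hnn i) q)
      ⟨0, Finset.mem_univ 0, Real.rpow_pos_of_pos hw0 q⟩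
  have hdp : 0 < ∑ i, w i ^ p :=
    Finset.sum_pos' (fun i _ => Real.rpow_nonneg (hnn i) p)
      ⟨0, Finset.mem_univ 0, Real.rpow_pos_of_pos hw0 p⟩
  have ht1 : -(w 0 ^ (q - 1)) + w 1 ^ (q - 1) ≤ 0 := by
    have : w 1 ^ (q - 1) ≤ w 0 ^ (q - 1) :=
      Real.rpow_le_rpow h2.le h12.le (by linarith)
    linarith
  have ht2 : 0 ≤ -(w 0 ^ (p - 1)) + w 1 ^ (p - 1) := by
    rcases eq_or_lt_of_le hp1 with h | h
    · simp [h]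
    · have : w 0 ^ (p - 1) < w 1 ^ (p - 1) :=
        Real.rpow_lt_rpow_of_neg h2 h12 (by linarith)
      linarith
  rcases eq_or_lt_of_le hp1 with h | h
  · have hq1 : 1 < q := lt_of_le_of_ne hq (h ▸ hpq)
    have h1' : w 1 ^ (q - 1) < w 0 ^ (q - 1) :=
      Real.rpow_lt_rpow h2.le h12 (by linarith)
    have : (-(w 0 ^ (q - 1)) + w 1 ^ (q - 1)) / (∑ i, w i ^ q) < 0 :=
      div_neg_of_neg_of_pos (by linarith) hdq
    have h2' : 0 ≤ (-(w 0 ^ (p - 1)) + w 1 ^ (p - 1)) / (∑ i, w i ^ p) :=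
      div_nonneg ht2 hdp.le
    linarith
  · have h2' : 0 < (-(w 0 ^ (p - 1)) + w 1 ^ (p - 1)) / (∑ i, w i ^ p) := by
      have : w 0 ^ (p - 1) < w 1 ^ (p - 1) :=
        Real.rpow_lt_rpow_of_neg h2 h12 (by linarith)
      exact div_pos (by linarith) hdp
    have h1' : (-(w 0 ^ (q - 1)) + w 1 ^ (q - 1)) / (∑ i, w i ^ q) ≤ 0 :=
      div_nonpos_of_nonpos_of_nonneg ht1 hdq.le
    linarith
end

section
/- For 0 < t < 1 and w_1 > w_2 > 0, the function h(w) = w^t [w_2^{t-1}(ln w_2 − ln w) − w_1^{t-1}(ln w_1 − ln w)] on (0,∞) attains its maximum at w_* = exp((w_1^{t-1} ln w_1 − w_2^{t-1} ln w_2)/(w_1^{t-1} − w_2^{t-1}) − 1/t), and the maximum value h(w_*) = (1/t) w_*^t (w_2^{t-1} − w_1^{t-1}) is strictly positive. -/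
open Finset

lemma key_ineq (t u : ℝ) (ht : 0 < t) : Real.exp (t * u) * (1 - t * u) ≤ 1 := by
  have hE := (Real.exp_pos (t * u)).le
  have h1 : 1 - t * u ≤ Real.exp (-(t * u)) := by
    linarith [Real.add_one_le_exp (-(t * u))]
  calc Real.exp (t * u) * (1 - t * u)
      ≤ Real.exp (t * u) * Real.exp (-(t * u)) := by
        exact mul_le_mul_of_nonneg_left h1 hE
    _ = 1 := by rw [← Real.exp_add]; simp

theorem stmt13 (t w₁ w₂ : ℝ) (ht : 0 < t) (ht1 : t < 1) (h12 : w₂ < w₁) (h2 : 0 < w₂)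
    (h : ℝ → ℝ)
    (hh : h = fun w => w ^ t * (w₂ ^ (t - 1) * (Real.log w₂ - Real.log w) -
      w₁ ^ (t - 1) * (Real.log w₁ - Real.log w)))
    (wst : ℝ)
    (hwst : wst = Real.exp ((w₁ ^ (t - 1) * Real.log w₁ - w₂ ^ (t - 1) * Real.log w₂) /
      (w₁ ^ (t - 1) - w₂ ^ (t - 1)) - 1 / t)) :
    (∀ w : ℝ, 0 < w → h w ≤ h wst) ∧
    h wst = (1 / t) * wst ^ t * (w₂ ^ (t - 1) - w₁ ^ (t - 1)) ∧
    0 < h wst := by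
  have hw1 : 0 < w₁ := h2.trans h12
  set a := w₂ ^ (t - 1) with ha
  set b := w₁ ^ (t - 1) with hb
  have hbpos : 0 < b := Real.rpow_pos_of_pos hw1 _
  have hba : b < a := Real.rpow_lt_rpow_of_neg h2 h12 (by linarith)
  set c := a - b with hc
  have hcpos : 0 < c := by simp [hc]; linarith
  set K := a * Real.log w₂ - b * Real.log w₁ with hK
  have htne : t ≠ 0 := ht.ne'
  have hcne : c ≠ 0 := hcpos.ne'
  have hwstpos : 0 < wst := by rw [hwst]; exact Real.exp_pos _
  have hlog : Real.log wst = K / c - 1 / t := by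
    rw [hwst, Real.log_exp]
    rw [hK, hc]
    have : b - a ≠ 0 := by simp [hc] at hcne; intro hx; apply hcne; linarith
    rw [← neg_sub a b, div_neg, ← neg_div, neg_sub]
  have hform : ∀ w : ℝ, h w = w ^ t * (K - c * Real.log w) := by
    intro w; rw [hh]; simp only [hK, hc]; ring
  have hKc : K - c * Real.log wst = c / t := by
    rw [hlog]; field_simp; ring
  have heq : h wst = (1 / t) * wst ^ t * (w₂ ^ (t - 1) - w₁ ^ (t - 1)) := by
    rw [hform, hKc, ← ha, ← hb, ← hc]; ring
  have hpos : 0 < h wst := by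
    rw [heq, ← ha, ← hb, ← hc]
    have := Real.rpow_pos_of_pos hwstpos t
    positivity
  refine ⟨?_, heq, hpos⟩
  intro w hw
  rw [hform, hform]
  have hwt : w ^ t = Real.exp (t * Real.log w) := by
    rw [Real.rpow_def_of_pos hw]; ring_nf
  have hwstt : wst ^ t = Real.exp (t * Real.log wst) := by
    rw [Real.rpow_def_of_pos hwstpos]; ring_nf
  rw [hwt, hwstt, hKc]
  set x := Real.log w
  set xs := Real.log wst
  set u := x - xs with hu
  have hx : x = xs + u := by rw [hu]; ring
  have hKx : K - c * x = c / t - c * u := by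
    have : c * xs = K - c / t := by
      have := hKc; linarith
    rw [hx]; linarith [this]
  rw [hKx, hx, mul_add, Real.exp_add]
  have hk := key_ineq t u ht
  have hE := Real.exp_pos (t * u)
  have hEs := (Real.exp_pos (t * xs)).le
  have step : Real.exp (t * u) * (c / t - c * u) ≤ c / t := by
    have h2 : c / t - c * u = (c / t) * (1 - t * u) := by field_simp
    rw [h2, mul_comm (Real.exp (t * u)), mul_assoc]
    have := mul_le_mul_of_nonneg_left hk (le_of_lt (div_pos hcpos ht))
    linarith
  calc Real.exp (t * xs) * Real.exp (t * u) * (c / t - c * u)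
      = Real.exp (t * xs) * (Real.exp (t * u) * (c / t - c * u)) := by ring
    _ ≤ Real.exp (t * xs) * (c / t) := mul_le_mul_of_nonneg_left step hEs
end

section
/- For positive reals w_1, ..., w_d not all equal and 0 < p < q, (Σᵢ w_i^{q−1})/(Σᵢ w_i^q) < (Σᵢ w_i^{p−1})/(Σᵢ w_i^p). -/
open Finset

private lemma expand_aux {a b p q : ℝ} (ha : 0 < a) (hb : 0 < b) :
    a ^ (p-1) * b ^ (p-1) * ((a ^ (q-p) - b ^ (q-p)) * (a - b)) =
      (a ^ (p-1) * b ^ q + b ^ (p-1) * a ^ q) -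
        (a ^ (q-1) * b ^ p + b ^ (q-1) * a ^ p) := by
  have e1 : ∀ x : ℝ, 0 < x → x ^ q = x ^ (p-1) * x ^ (q-p) * x := by
    intro x hx
    rw [show x ^ q = x ^ ((p-1)+(q-p)+1) by ring_nf, Real.rpow_add hx, Real.rpow_add hx,
      Real.rpow_one]
  have e2 : ∀ x : ℝ, 0 < x → x ^ (q-1) = x ^ (p-1) * x ^ (q-p) := by
    intro x hx
    rw [← Real.rpow_add hx]
    ring_nf
  have e3 : ∀ x : ℝ, 0 < x → x ^ p = x ^ (p-1) * x := by
    intro x hx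
    rw [show x ^ p = x ^ ((p-1)+1) by ring_nf, Real.rpow_add hx, Real.rpow_one]
  rw [e1 a ha, e1 b hb, e2 a ha, e2 b hb, e3 a ha, e3 b hb]
  ring

private lemma key_le {a b p q : ℝ} (ha : 0 < a) (hb : 0 < b) (hp : 0 < p) (hpq : p < q) :
    a ^ (q-1) * b ^ p + b ^ (q-1) * a ^ p ≤ a ^ (p-1) * b ^ q + b ^ (p-1) * a ^ q := by
  have hqp : 0 < q - p := by linarith
  have hfac : 0 ≤ (a ^ (q-p) - b ^ (q-p)) * (a - b) := by
    rcases le_total a b with h | h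
    · have := Real.rpow_le_rpow ha.le h hqp.le
      nlinarith
    · have := Real.rpow_le_rpow hb.le h hqp.le
      exact mul_nonneg (by linarith) (by linarith)
  have hpos : 0 ≤ a ^ (p-1) * b ^ (p-1) * ((a ^ (q-p) - b ^ (q-p)) * (a - b)) :=
    mul_nonneg (mul_nonneg (Real.rpow_pos_of_pos ha _).le (Real.rpow_pos_of_pos hb _).le) hfac
  have := expand_aux (p := p) (q := q) ha hb
  linarith

private lemma key_lt {a b p q : ℝ} (ha : 0 < a) (hb : 0 < b) (hp : 0 < p) (hpq : p < q)
    (hab : a ≠ b) :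
    a ^ (q-1) * b ^ p + b ^ (q-1) * a ^ p < a ^ (p-1) * b ^ q + b ^ (p-1) * a ^ q := by
  have hqp : 0 < q - p := by linarith
  have hfac : 0 < (a ^ (q-p) - b ^ (q-p)) * (a - b) := by
    rcases lt_trichotomy a b with h | h | h
    · have := Real.rpow_lt_rpow ha.le h hqp
      exact mul_pos_of_neg_of_neg (by linarith) (by linarith)
    · exact absurd h hab
    · have := Real.rpow_lt_rpow hb.le h hqp
      exact mul_pos (by linarith) (by linarith)
  have hpos : 0 < a ^ (p-1) * b ^ (p-1) * ((a ^ (q-p) - b ^ (q-p)) * (a - b)) :=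
    mul_pos (mul_pos (Real.rpow_pos_of_pos ha _) (Real.rpow_pos_of_pos hb _)) hfac
  have := expand_aux (p := p) (q := q) ha hb
  linarith

theorem stmt17 {d : ℕ} (p q : ℝ) (hp : 0 < p) (hpq : p < q)
    (w : Fin d → ℝ) (hw : ∀ i, 0 < w i) (hne : ∃ i j, w i ≠ w j) :
    (∑ i, w i ^ (q - 1)) / (∑ i, w i ^ q) < (∑ i, w i ^ (p - 1)) / (∑ i, w i ^ p) := by
  obtain ⟨i0, j0, hij⟩ := hne
  have hdne : (Finset.univ : Finset (Fin d)).Nonempty := ⟨i0, mem_univ i0⟩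
  have hSq : 0 < ∑ i, w i ^ q :=
    Finset.sum_pos (fun i _ => Real.rpow_pos_of_pos (hw i) _) hdne
  have hSp : 0 < ∑ i, w i ^ p :=
    Finset.sum_pos (fun i _ => Real.rpow_pos_of_pos (hw i) _) hdne
  rw [div_lt_div_iff₀ hSq hSp]
  -- double sum comparison
  have H : ∑ x ∈ (univ ×ˢ univ : Finset (Fin d × Fin d)),
      (w x.1 ^ (q-1) * w x.2 ^ p + w x.2 ^ (q-1) * w x.1 ^ p) <
      ∑ x ∈ (univ ×ˢ univ : Finset (Fin d × Fin d)),
      (w x.1 ^ (p-1) * w x.2 ^ q + w x.2 ^ (p-1) * w x.1 ^ q) := by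
    apply Finset.sum_lt_sum
    · intro x _
      exact key_le (hw x.1) (hw x.2) hp hpq
    · exact ⟨(i0, j0), Finset.mem_product.2 ⟨mem_univ _, mem_univ _⟩,
        key_lt (hw i0) (hw j0) hp hpq hij⟩
  simp only [Finset.sum_add_distrib, Finset.sum_product] at H
  have c1 : ∑ i, ∑ j, w j ^ (q-1) * w i ^ p = ∑ i, ∑ j, w i ^ (q-1) * w j ^ p :=
    Finset.sum_comm
  have c2 : ∑ i, ∑ j, w j ^ (p-1) * w i ^ q = ∑ i, ∑ j, w i ^ (p-1) * w j ^ q :=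
    Finset.sum_comm
  rw [c1, c2] at H
  have e1 : (∑ i, w i ^ (q-1)) * ∑ i, w i ^ p = ∑ i, ∑ j, w i ^ (q-1) * w j ^ p :=
    Finset.sum_mul_sum _ _ _ _
  have e2 : (∑ i, w i ^ (p-1)) * ∑ i, w i ^ q = ∑ i, ∑ j, w i ^ (p-1) * w j ^ q :=
    Finset.sum_mul_sum _ _ _ _
  rw [e1, e2]
  linarith
end
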